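/- Let G = Q:L be a biextraspecial group of rank m, t ∈ L an involution, and R = C_Q(t). Then the restriction map C_{Aut(G)}(L) → Aut(R), α ↦ α|_R, is a group isomorphism. -/

import Mathlib

/-- The centre of the subgroup `Q`, viewed as a subgroup of the ambient group `G`. -/
def centerOf (G : Type*) [Group G] (Q : Subgroup G) : Subgroup G :=
  Subgroup.centralizer (Q : Set G) ⊓ Q

open scoped commutatorElement

/-- A biextraspecial group of rank `m`: `G` is an extension of a special 2-group
`Q` of order `2^(2+2m)` by `L₂(2) ≅ S₃`, the centre `Z = Z(Q) ≅ 2²` is the natural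
module (elementary abelian of order 4 with faithful induced `G/Q`-action), `Q/Z` is
elementary abelian, and every element of order 3 acts fixed-point-freely on `Q`
(equivalently, `Q/Z` has only natural composition factors). -/
structure IsBiextraspecial (G : Type*) [Group G] (Q : Subgroup G) (m : ℕ) : Prop where
  normal : Q.Normal
  card_Q : Nat.card Q = 2 ^ (2 + 2 * m)
  quot_iso : Nonempty ((G ⧸ Q) ≃* Equiv.Perm (Fin 3))
  card_center : Nat.card (centerOf G Q) = 4
  center_exponent : ∀ z ∈ centerOf G Q, z * z = 1
  center_faithful : ∀ g : G, (∀ z ∈ centerOf G Q, g * z * g⁻¹ = z) → g ∈ Q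
  sq_mem_center : ∀ q ∈ Q, q * q ∈ centerOf G Q
  comm_mem_center : ∀ q ∈ Q, ∀ r ∈ Q, ⁅q, r⁆ ∈ centerOf G Q
  order_three_fpf : ∀ g : G, orderOf g = 3 → ∀ q ∈ Q, g * q * g⁻¹ = q → q = 1

/-- A dent: a normal subgroup `D` of `G` with `Z(Q) < D < Q` such that `D/Z` is an
irreducible `L`-submodule of `Q/Z` (i.e. `D` is minimal among normal subgroups
strictly containing `Z(Q)`). -/
structure IsDent (G : Type*) [Group G] (Q D : Subgroup G) : Prop where
  normal : D.Normal
  center_lt : centerOf G Q < D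
  lt_Q : D < Q
  minimal : ∀ E : Subgroup G, E.Normal → centerOf G Q < E → E ≤ D → E = D

/-- `D₃` is the diagonal dent of the distinct dents `D₁` and `D₂`: the unique third
dent contained in `D₁D₂`. -/
def IsDiagonal (G : Type*) [Group G] (Q D₁ D₂ D₃ : Subgroup G) : Prop :=
  IsDent G Q D₁ ∧ IsDent G Q D₂ ∧ IsDent G Q D₃ ∧
    D₁ ≠ D₂ ∧ D₃ ≠ D₁ ∧ D₃ ≠ D₂ ∧ D₃ ≤ D₁ ⊔ D₂

/-- Two subgroups commute elementwise, i.e. `[D₁, D₂] = 1`. -/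
def DentsCommute (G : Type*) [Group G] (D₁ D₂ : Subgroup G) : Prop :=
  ∀ d₁ ∈ D₁, ∀ d₂ ∈ D₂, d₁ * d₂ = d₂ * d₁

/-- A dent is singular when it is elementary abelian (of type `2⁴`). -/
def IsSingularDent (G : Type*) [Group G] (D : Subgroup G) : Prop :=
  ∀ d ∈ D, d * d = 1

/-- A standard basis `x, y` of a dent `D` with respect to `L = ⟨s, t⟩`:
`D = ⟨x, y, Z⟩` with `xᵗ = x`, `xˢ = y` and `yˢ = xy` (singular case) or
`yˢ = x⁻¹y⁻¹` (non-singular case). -/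
structure StdBasis (G : Type*) [Group G] (Q : Subgroup G) (s t : G)
    (D : Subgroup G) (x y : G) : Prop where
  x_mem : x ∈ D
  x_notin : x ∉ centerOf G Q
  gen : D = centerOf G Q ⊔ Subgroup.closure {x, y}
  t_fix : t * x * t⁻¹ = x
  s_x : s * x * s⁻¹ = y
  s_y : s * y * s⁻¹ = x * y ∨ s * y * s⁻¹ = x⁻¹ * y⁻¹

/-- The centraliser `C_{Aut(G)}(L)` of a subgroup `L` in the automorphism group of
`G`: all automorphisms fixing `L` elementwise. -/
def autCentralizer (G : Type*) [Group G] (L : Subgroup G) : Subgroup (MulAut G) where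
  carrier := {α : MulAut G | ∀ l ∈ L, α l = l}
  one_mem' := fun l _ => rfl
  mul_mem' := by
    intro α β hα hβ l hl
    have : (α * β) l = α (β l) := rfl
    rw [this, hβ l hl, hα l hl]
  inv_mem' := by
    intro α hα l hl
    have h1 : α⁻¹ (α l) = l := α.symm_apply_apply l
    rw [hα l hl] at h1
    exact h1

/-!
Choose `s ∈ L` of order `3` with `t s t⁻¹ = s⁻¹`, and write `xˢ = s x s⁻¹`. Since `s` acts
fixed-point-freely on `Q`, `q qˢ q^{s⁻¹} = 1` for all `q ∈ Q`; polarizing this identity at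
`q = x y` gives `[xˢ, y] = [x, y] [x, y]ˢ`. With `R ∩ Rˢ = 1` and a lifting argument through the
elementary abelian group `Q/Z(Q)`, every `q ∈ Q` is uniquely `r₁ r₂ˢ` with `r₁, r₂ ∈ R`.
An automorphism centralizing `L` and `R` therefore fixes `Q = R Rˢ` and `G = Q L`.
Conversely, an automorphism `β` of `R` fixes `R' ≤ C_Z(t)`, which has order `2`; by the
commutator formula `r₁ r₂ˢ ↦ β(r₁) β(r₂)ˢ` is then an automorphism of `Q`, it commutes with
`s` and `t`, hence with `L = ⟨s, t⟩`, and so it extends to `G = Q ⋊ L`.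
-/

theorem MulAut.mul_apply_mul_apply_apply_eq_one {H : Type*} [Group H] [Finite H] (σ : MulAut H)
    (hσ : σ ^ 3 = 1) (hfix : ∀ x, σ x = x → x = 1) (x : H) : x * σ x * σ (σ x) = 1 := by
  -- `y ↦ y⁻¹ σ(y)` is injective, hence onto, and the product telescopes on its values.
  have hinj : Function.Injective fun y : H => y⁻¹ * σ y := by
    intro y z hyz
    have hσz : σ z = z * (y⁻¹ * σ y) := by
      rw [show y⁻¹ * σ y = z⁻¹ * σ z from hyz]; group
    have : σ (z * y⁻¹) = z * y⁻¹ := by rw [map_mul, map_inv, hσz]; group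
    exact (mul_inv_eq_one.mp (hfix _ this)).symm
  obtain ⟨y, rfl⟩ := (Finite.injective_iff_surjective.mp hinj) x
  have hσ3 : σ (σ (σ y)) = y := by
    simpa [pow_succ, MulAut.mul_apply] using congrArg (· y) hσ
  simp only [map_mul, map_inv, hσ3]
  group

section Conjugation

variable {G : Type*} [Group G] {s t : G}

theorem conj_conj_eq_conj_inv_of_orderOf_eq_three (hs : orderOf s = 3) (x : G) :
    s * (s * x * s⁻¹) * s⁻¹ = s⁻¹ * x * s := by
  have h3 : s ^ 3 = 1 := hs ▸ pow_orderOf_eq_one s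
  have hinv : s⁻¹ = s * s := inv_eq_of_mul_eq_one_right (by simpa [pow_succ, mul_assoc] using h3)
  calc s * (s * x * s⁻¹) * s⁻¹ = (s * s) * x * (s * s)⁻¹ := by group
    _ = s⁻¹ * x * s := by rw [← hinv, inv_inv]

theorem conj_conj_eq_self_of_orderOf_eq_two (ht : orderOf t = 2) (x : G) :
    t * (t * x * t⁻¹) * t⁻¹ = x := by
  have htt : t * t = 1 := by rw [← pow_two, ← ht, pow_orderOf_eq_one]
  calc t * (t * x * t⁻¹) * t⁻¹ = (t * t) * x * (t * t)⁻¹ := by group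
    _ = x := by rw [htt, one_mul, inv_one, mul_one]

theorem conj_conj_of_conj_eq_inv (hts : t * s * t⁻¹ = s⁻¹) (x : G) :
    t * (s * x * s⁻¹) * t⁻¹ = s⁻¹ * (t * x * t⁻¹) * s := by
  calc t * (s * x * s⁻¹) * t⁻¹ = (t * s * t⁻¹) * (t * x * t⁻¹) * (t * s * t⁻¹)⁻¹ := by group
    _ = s⁻¹ * (t * x * t⁻¹) * s := by rw [hts, inv_inv]

theorem conj_inv_conj_of_conj_eq_inv (hts : t * s * t⁻¹ = s⁻¹) (x : G) :
    t * (s⁻¹ * x * s) * t⁻¹ = s * (t * x * t⁻¹) * s⁻¹ := by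
  have hts' : t * s⁻¹ * t⁻¹ = s := by simpa [mul_assoc] using congrArg (·⁻¹) hts
  calc t * (s⁻¹ * x * s) * t⁻¹ = (t * s⁻¹ * t⁻¹) * (t * x * t⁻¹) * (t * s⁻¹ * t⁻¹)⁻¹ := by group
    _ = s * (t * x * t⁻¹) * s⁻¹ := by rw [hts']

end Conjugation

theorem Equiv.Perm.natCard_fin_three : Nat.card (Equiv.Perm (Fin 3)) = 6 := by
  rw [Nat.card_perm, Nat.card_eq_fintype_card, Fintype.card_fin]; rfl

set_option maxRecDepth 100000 in
theorem Equiv.Perm.exists_conj_eq_inv_fin_three :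
    ∀ τ : Equiv.Perm (Fin 3), τ * τ = 1 → τ ≠ 1 →
      ∃ σ : Equiv.Perm (Fin 3), σ * σ * σ = 1 ∧ σ ≠ 1 ∧ τ * σ * τ⁻¹ = σ⁻¹ := by
  decide

set_option maxRecDepth 100000 in
theorem Equiv.Perm.eq_one_of_conj_mul_sq_eq_one_fin_three :
    ∀ y : Equiv.Perm (Fin 3), y * y = 1 →
      (∀ c, c * y * c⁻¹ * y * (c * y * c⁻¹ * y) = 1) → y = 1 := by
  decide

theorem exists_orderOf_eq_three_conj_eq_inv {G : Type*} [Group G] {L : Subgroup G}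
    (e : L ≃* Equiv.Perm (Fin 3)) {t : G} (htL : t ∈ L) (ht : orderOf t = 2) :
    ∃ s ∈ L, orderOf s = 3 ∧ t * s * t⁻¹ = s⁻¹ := by
  have horder : ∀ x : L, orderOf (x : G) = orderOf (e x) := fun x => by
    rw [MulEquiv.orderOf_eq, orderOf_submonoid]
  have htt : t * t = 1 := by rw [← pow_two, ← ht, pow_orderOf_eq_one]
  obtain ⟨σ, hσ3, hσ1, hτσ⟩ := Equiv.Perm.exists_conj_eq_inv_fin_three (e ⟨t, htL⟩)
    (by rw [← map_mul, ← map_one e]; exact congrArg e (Subtype.ext htt))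
    (fun h => by
      have := horder ⟨t, htL⟩
      rw [orderOf_eq_one_iff.mpr h, ht] at this
      norm_num at this)
  refine ⟨e.symm σ, (e.symm σ).2, ?_, ?_⟩
  · rw [horder, MulEquiv.apply_symm_apply]
    exact orderOf_eq_prime (by rw [pow_succ, pow_two, hσ3]) hσ1
  · simpa using congrArg (fun x => ((e.symm x : L) : G)) hτσ

theorem Subgroup.closure_pair_eq_of_natCard_eq_six {G : Type*} [Group G] {L : Subgroup G}
    (hL : Nat.card L = 6) {s t : G} (hsL : s ∈ L) (htL : t ∈ L) (hs : orderOf s = 3)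
    (ht : orderOf t = 2) : Subgroup.closure {s, t} = L := by
  have : Finite L := Nat.finite_of_card_ne_zero (by rw [hL]; norm_num)
  have hle : Subgroup.closure {s, t} ≤ L := (Subgroup.closure_le L).mpr (by
    rintro x (rfl | rfl) <;> assumption)
  have h₃ := hs ▸ Subgroup.orderOf_dvd_natCard _ (Subgroup.subset_closure (by simp : s ∈ {s, t}))
  have h₂ := ht ▸ Subgroup.orderOf_dvd_natCard _ (Subgroup.subset_closure (by simp : t ∈ {s, t}))
  refine Subgroup.eq_of_le_of_card_ge hle (hL ▸ Nat.le_of_dvd ?_ ?_)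
  · exact Nat.pos_of_dvd_of_pos (Subgroup.card_dvd_of_le hle) (by rw [hL]; norm_num)
  · exact Nat.Coprime.mul_dvd_of_dvd_of_dvd (by norm_num) h₂ h₃

theorem Subgroup.IsComplement'.exists_mulAut_extend {G : Type*} [Group G] {Q L : Subgroup G}
    [Q.Normal] (hL : Q.IsComplement' L) (k : MulAut Q)
    (hk : ∀ l ∈ L, Commute (MulAut.conjNormal l) k) :
    ∃ α : MulAut G, (∀ q : Q, α q = k q) ∧ ∀ l ∈ L, α l = l := by
  set e := SemidirectProduct.mulEquivSubgroup hL
  let c := SemidirectProduct.congr (φ₁ := (Q.normalizerMonoidHom).comp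
      (Subgroup.inclusion (Q.normalizer_eq_top ▸ le_top)))
    (φ₂ := (Q.normalizerMonoidHom).comp (Subgroup.inclusion (Q.normalizer_eq_top ▸ le_top)))
    k (MulEquiv.refl L) (fun l => by
      ext q
      have := congrArg (fun f => (f q : G)) (hk l l.2).eq.symm
      simp only [MulAut.mul_apply, MulAut.conjNormal_apply] at this
      exact this)
  refine ⟨e.symm.trans (c.trans e), fun q => ?_, fun l hl => ?_⟩
  · have : e.symm q = SemidirectProduct.inl q := e.symm_apply_eq.mpr (by simp [e])
    simp [this, c, e]
  · have : e.symm l = SemidirectProduct.inr ⟨l, hl⟩ := e.symm_apply_eq.mpr (by simp [e])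
    simp [this, c, e]

def MulAut.restrict {G : Type*} [Group G] (A : Subgroup (MulAut G)) (H : Subgroup G)
    (hA : ∀ α ∈ A, ∀ x ∈ H, α x ∈ H) : A →* MulAut H where
  toFun α :=
    { toFun := fun x => ⟨(α : MulAut G) x, hA α α.2 x x.2⟩
      invFun := fun x => ⟨(α⁻¹ : MulAut G) x, hA _ (inv_mem α.2) x x.2⟩
      left_inv := fun x => Subtype.ext ((α : MulAut G).symm_apply_apply x)
      right_inv := fun x => Subtype.ext ((α : MulAut G).apply_symm_apply x)
      map_mul' := fun x y => Subtype.ext (map_mul (α : MulAut G) (x : G) y) }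
  map_one' := rfl
  map_mul' _ _ := rfl

section CenterOf

variable {G : Type*} [Group G] {Q : Subgroup G}

theorem centerOf_le : centerOf G Q ≤ Q := inf_le_right

theorem commute_of_mem_centerOf {z x : G} (hz : z ∈ centerOf G Q) (hx : x ∈ Q) : Commute z x :=
  ((Subgroup.mem_centralizer_iff.mp (Subgroup.mem_inf.mp hz).1) x hx).symm

instance centerOf.normal [Q.Normal] : (centerOf G Q).Normal := by
  unfold centerOf; infer_instance

theorem mem_centralizer_singleton_inf_iff {t x : G} :
    x ∈ Subgroup.centralizer {t} ⊓ Q ↔ t * x * t⁻¹ = x ∧ x ∈ Q := by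
  rw [Subgroup.mem_inf, Subgroup.mem_centralizer_singleton_iff, mul_inv_eq_iff_eq_mul, eq_comm]

end CenterOf

section ClassTwo

variable {G : Type*} [Group G] {Q : Subgroup G}

theorem commutatorElement_mul_right_of_mem (hQ : ∀ x ∈ Q, ∀ y ∈ Q, ⁅x, y⁆ ∈ centerOf G Q)
    {a b c : G} (ha : a ∈ Q) (hb : b ∈ Q) (hc : c ∈ Q) : ⁅a, b * c⁆ = ⁅a, b⁆ * ⁅a, c⁆ := by
  rw [commutatorElement_mul_right_eq_mul_conj, mul_assoc _ b, (commute_of_mem_centerOf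
    (hQ a ha c hc) hb).symm.eq, mul_assoc, mul_inv_cancel_right]

theorem commutatorElement_inv_right_of_mem (hQ : ∀ x ∈ Q, ∀ y ∈ Q, ⁅x, y⁆ ∈ centerOf G Q)
    {a b : G} (ha : a ∈ Q) (hb : b ∈ Q) : ⁅a, b⁻¹⁆ = ⁅a, b⁆⁻¹ := by
  rw [commutatorElement_inv_right, commutatorElement_inv,
    (commute_of_mem_centerOf (hQ b hb a ha) (inv_mem hb)).symm.eq, inv_mul_cancel_right]

theorem mul_mul_mul_eq_commutator_mul (hQ : ∀ x ∈ Q, ∀ y ∈ Q, ⁅x, y⁆ ∈ centerOf G Q)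
    {x₁ x₂ x₃ y₁ y₂ y₃ : G} (hx₁ : x₁ ∈ Q) (hx₂ : x₂ ∈ Q) (hx₃ : x₃ ∈ Q) (hy₁ : y₁ ∈ Q)
    (hy₂ : y₂ ∈ Q) : (x₁ * y₁) * (x₂ * y₂) * (x₃ * y₃) =
      ⁅y₁, x₂⁆ * ⁅y₂, x₃⁆ * ⁅y₁, x₃⁆ * ((x₁ * x₂ * x₃) * (y₁ * y₂ * y₃)) := by
  have swap : ∀ a b : G, a * b = ⁅a, b⁆ * (b * a) := fun a b => by
    rw [commutatorElement_def]; group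
  have h₁ := hQ y₁ hy₁ x₂ hx₂
  have h₂ := hQ y₂ hy₂ x₃ hx₃
  have h₃ := hQ y₁ hy₁ x₃ hx₃
  rw [show (x₁ * y₁) * (x₂ * y₂) * (x₃ * y₃) = x₁ * ((y₁ * x₂) * ((y₂ * x₃) * y₃)) by group,
    swap y₁ x₂, swap y₂ x₃]
  simp only [mul_assoc, (commute_of_mem_centerOf h₂ hy₁).symm.left_comm]
  rw [← mul_assoc y₁ x₃, swap y₁ x₃]
  simp only [mul_assoc, (commute_of_mem_centerOf h₁ hx₁).symm.left_comm,
    (commute_of_mem_centerOf h₂ hx₁).symm.left_comm,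
    (commute_of_mem_centerOf h₃ hx₁).symm.left_comm,
    (commute_of_mem_centerOf h₂ hx₂).symm.left_comm,
    (commute_of_mem_centerOf h₃ hx₂).symm.left_comm]

end ClassTwo

namespace IsBiextraspecial

variable {G : Type*} [Group G] {Q : Subgroup G} {m : ℕ} {s t : G}

theorem finite (hG : IsBiextraspecial G Q m) : Finite Q :=
  Nat.finite_of_card_ne_zero (by rw [hG.card_Q]; positivity)

theorem inv_eq_of_mem_centerOf (hG : IsBiextraspecial G Q m) {z : G} (hz : z ∈ centerOf G Q) :
    z⁻¹ = z :=
  inv_eq_of_mul_eq_one_right (hG.center_exponent z hz)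

theorem mul_conj_mul_conj_inv_eq_one (hG : IsBiextraspecial G Q m) (hs : orderOf s = 3)
    {q : G} (hq : q ∈ Q) : q * (s * q * s⁻¹) * (s⁻¹ * q * s) = 1 := by
  have := hG.normal
  have := hG.finite
  have h := (MulAut.conjNormal s).mul_apply_mul_apply_apply_eq_one
    (by rw [← map_pow, ← hs, pow_orderOf_eq_one, map_one])
    (fun x hx => Subtype.ext (hG.order_three_fpf s hs x x.2 (congrArg Subtype.val hx))) ⟨q, hq⟩
  simpa [MulAut.conjNormal_apply, conj_conj_eq_conj_inv_of_orderOf_eq_three hs] using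
    congrArg Subtype.val h

theorem conj_inv_eq_mul_conj (hG : IsBiextraspecial G Q m) (hs : orderOf s = 3) {z : G}
    (hz : z ∈ centerOf G Q) : s⁻¹ * z * s = z * (s * z * s⁻¹) := by
  have := hG.normal
  have hz' : s * z * s⁻¹ ∈ centerOf G Q := (centerOf.normal).conj_mem z hz s
  rw [eq_inv_of_mul_eq_one_right (hG.mul_conj_mul_conj_inv_eq_one hs (centerOf_le hz)),
    mul_inv_rev, hG.inv_eq_of_mem_centerOf hz, hG.inv_eq_of_mem_centerOf hz',
    (commute_of_mem_centerOf hz' (centerOf_le hz)).eq]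

/-- Polarization of `mul_conj_mul_conj_inv_eq_one` at `q = x * y`. -/
theorem commutatorElement_conj_right (hG : IsBiextraspecial G Q m) (hs : orderOf s = 3)
    {x y : G} (hx : x ∈ Q) (hy : y ∈ Q) : ⁅y, s * x * s⁻¹⁆ = s⁻¹ * ⁅y, x⁆ * s := by
  have := hG.normal
  have hQ := hG.comm_mem_center
  have hx' : s * x * s⁻¹ ∈ Q := this.conj_mem x hx s
  have hx'' : s⁻¹ * x * s ∈ Q := by simpa using this.conj_mem x hx s⁻¹
  have hy' : s * y * s⁻¹ ∈ Q := this.conj_mem y hy s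
  have hNx := hG.mul_conj_mul_conj_inv_eq_one hs hx
  have hNxy := hG.mul_conj_mul_conj_inv_eq_one hs (mul_mem hx hy)
  rw [show s * (x * y) * s⁻¹ = (s * x * s⁻¹) * (s * y * s⁻¹) by group,
    show s⁻¹ * (x * y) * s = (s⁻¹ * x * s) * (s⁻¹ * y * s) by group,
    mul_mul_mul_eq_commutator_mul hQ hx hx' hx'' hy hy', hNx,
    hG.mul_conj_mul_conj_inv_eq_one hs hy, mul_one, mul_one] at hNxy
  -- `hNxy : ⁅y, xˢ⁆ * ⁅yˢ, x^{s⁻¹}⁆ * ⁅y, x^{s⁻¹}⁆ = 1`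
  have e₁ : ⁅s * y * s⁻¹, s⁻¹ * x * s⁆ = s * ⁅y, s * x * s⁻¹⁆ * s⁻¹ := by
    rw [conjugate_commutatorElement, conj_conj_eq_conj_inv_of_orderOf_eq_three hs]
  have e₂ : ⁅y, s⁻¹ * x * s⁆ = ⁅y, s * x * s⁻¹⁆⁻¹ * ⁅y, x⁆⁻¹ := by
    rw [eq_inv_of_mul_eq_one_right hNx, mul_inv_rev,
      commutatorElement_mul_right_of_mem hQ hy (inv_mem hx') (inv_mem hx),
      commutatorElement_inv_right_of_mem hQ hy hx', commutatorElement_inv_right_of_mem hQ hy hx]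
  have hc := hQ y hy _ hx'
  have key : s * ⁅y, s * x * s⁻¹⁆ * s⁻¹ = ⁅y, x⁆ := by
    rwa [e₁, e₂, (commute_of_mem_centerOf hc (centerOf_le
      ((centerOf.normal).conj_mem _ hc s))).eq, mul_assoc, mul_inv_cancel_left,
      mul_inv_eq_one] at hNxy
  rw [← key]
  group

theorem commutatorElement_conj_left (hG : IsBiextraspecial G Q m) (hs : orderOf s = 3)
    {x y : G} (hx : x ∈ Q) (hy : y ∈ Q) :
    ⁅s * x * s⁻¹, y⁆ = ⁅x, y⁆ * (s * ⁅x, y⁆ * s⁻¹) := by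
  rw [← commutatorElement_inv, hG.commutatorElement_conj_right hs hx hy,
    show (s⁻¹ * ⁅y, x⁆ * s)⁻¹ = s⁻¹ * ⁅y, x⁆⁻¹ * s by group, commutatorElement_inv,
    hG.conj_inv_eq_mul_conj hs (hG.comm_mem_center x hx y hy)]

theorem mul_conj_mul_mul_conj (hG : IsBiextraspecial G Q m) (hs : orderOf s = 3)
    {x₁ x₂ y₁ y₂ : G} (hx₁ : x₁ ∈ Q) (hx₂ : x₂ ∈ Q) (hy₁ : y₁ ∈ Q) :
    x₁ * (s * x₂ * s⁻¹) * (y₁ * (s * y₂ * s⁻¹)) =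
      ⁅x₂, y₁⁆ * x₁ * y₁ * (s * (⁅x₂, y₁⁆ * x₂ * y₂) * s⁻¹) := by
  have := hG.normal
  have hc := hG.comm_mem_center x₂ hx₂ y₁ hy₁
  have hc' : s * ⁅x₂, y₁⁆ * s⁻¹ ∈ centerOf G Q := (centerOf.normal).conj_mem _ hc s
  calc x₁ * (s * x₂ * s⁻¹) * (y₁ * (s * y₂ * s⁻¹))
      = x₁ * (⁅s * x₂ * s⁻¹, y₁⁆ * y₁ * (s * x₂ * s⁻¹)) * (s * y₂ * s⁻¹) := by
        rw [commutatorElement_def]; group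
    _ = (x₁ * ⁅x₂, y₁⁆) * ((s * ⁅x₂, y₁⁆ * s⁻¹) * y₁) * (s * x₂ * s⁻¹) * (s * y₂ * s⁻¹) := by
        rw [hG.commutatorElement_conj_left hs hx₂ hy₁]; group
    _ = (⁅x₂, y₁⁆ * x₁) * (y₁ * (s * ⁅x₂, y₁⁆ * s⁻¹)) * (s * x₂ * s⁻¹) * (s * y₂ * s⁻¹) := by
        rw [(commute_of_mem_centerOf hc hx₁).eq, (commute_of_mem_centerOf hc' hy₁).eq]
    _ = ⁅x₂, y₁⁆ * x₁ * y₁ * (s * (⁅x₂, y₁⁆ * x₂ * y₂) * s⁻¹) := by group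

theorem eq_of_mem_centerOf_of_conj_eq (hG : IsBiextraspecial G Q m) (htQ : t ∉ Q) {a b : G}
    (ha : a ∈ centerOf G Q) (hb : b ∈ centerOf G Q) (hat : t * a * t⁻¹ = a)
    (hbt : t * b * t⁻¹ = b) (ha1 : a ≠ 1) (hb1 : b ≠ 1) : a = b := by
  by_contra hab
  set C := centerOf G Q ⊓ Subgroup.centralizer {t}
  have : Finite (centerOf G Q) := Nat.finite_of_card_ne_zero (by rw [hG.card_center]; norm_num)
  have hC : ∀ z ∈ centerOf G Q, t * z * t⁻¹ = z → z ∈ C := fun z hz hzt =>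
    ⟨hz, (mem_centralizer_singleton_inf_iff.mpr ⟨hzt, centerOf_le hz⟩).1⟩
  have h3 : 3 ≤ Nat.card C := by
    rw [← SetLike.coe_sort_coe, Nat.card_coe_set_eq,
      ← (Set.ncard_eq_three.mpr ⟨1, a, b, ha1.symm, hb1.symm, hab, rfl⟩)]
    refine Set.ncard_le_ncard ?_ ((Set.toFinite (centerOf G Q : Set G)).subset inf_le_left)
    rintro z (rfl | rfl | rfl)
    exacts [one_mem C, hC _ ha hat, hC _ hb hbt]
  have h4 : Nat.card C ∣ 4 := hG.card_center ▸ Subgroup.card_dvd_of_le inf_le_left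
  have hCZ : C = centerOf G Q := by
    refine Subgroup.eq_of_le_of_card_ge inf_le_left ?_
    rw [hG.card_center]
    have := Nat.le_of_dvd (by norm_num) h4
    interval_cases h : Nat.card C <;> simp_all
  refine htQ (hG.center_faithful t fun z hz => ?_)
  rw [← hCZ] at hz
  rw [← Subgroup.mem_centralizer_singleton_iff.mp hz.2]
  group

theorem eq_one_of_mem_of_conj_mem (hG : IsBiextraspecial G Q m) (hs : orderOf s = 3)
    (hts : t * s * t⁻¹ = s⁻¹) {u : G} (hu : u ∈ Subgroup.centralizer {t} ⊓ Q)
    (hsu : s⁻¹ * u * s ∈ Subgroup.centralizer {t} ⊓ Q) : u = 1 := by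
  obtain ⟨hut, huQ⟩ := mem_centralizer_singleton_inf_iff.mp hu
  have hv : s * u * s⁻¹ = s⁻¹ * u * s := by
    rw [← (mem_centralizer_singleton_inf_iff.mp hsu).1, conj_inv_conj_of_conj_eq_inv hts, hut]
  refine hG.order_three_fpf s hs u huQ ?_
  calc s * u * s⁻¹ = s * (s * u * s⁻¹) * s⁻¹ := by
        rw [conj_conj_eq_conj_inv_of_orderOf_eq_three hs, hv]
    _ = s * (s⁻¹ * u * s) * s⁻¹ := by rw [hv]
    _ = u := by group

theorem eq_and_eq_of_mul_conj_eq (hG : IsBiextraspecial G Q m) (hs : orderOf s = 3)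
    (hts : t * s * t⁻¹ = s⁻¹) {r₁ r₂ r₁' r₂' : G} (h₁ : r₁ ∈ Subgroup.centralizer {t} ⊓ Q)
    (h₂ : r₂ ∈ Subgroup.centralizer {t} ⊓ Q) (h₁' : r₁' ∈ Subgroup.centralizer {t} ⊓ Q)
    (h₂' : r₂' ∈ Subgroup.centralizer {t} ⊓ Q)
    (h : r₁ * (s * r₂ * s⁻¹) = r₁' * (s * r₂' * s⁻¹)) : r₁ = r₁' ∧ r₂ = r₂' := by
  have hu : s⁻¹ * (r₁'⁻¹ * r₁) * s = r₂' * r₂⁻¹ := by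
    rw [show r₁'⁻¹ * r₁ = (s * r₂' * s⁻¹) * (s * r₂ * s⁻¹)⁻¹ by
      rw [inv_mul_eq_iff_eq_mul, ← mul_assoc, ← h]; group]
    group
  have h1 : r₁'⁻¹ * r₁ = 1 := hG.eq_one_of_mem_of_conj_mem hs hts (mul_mem (inv_mem h₁') h₁)
    (hu ▸ mul_mem h₂' (inv_mem h₂))
  obtain rfl : r₁ = r₁' := (inv_mul_eq_one.mp h1).symm
  exact ⟨rfl, conj_injective (mul_left_cancel h)⟩

theorem conj_conj_eq_mul_conj (hG : IsBiextraspecial G Q m) (hs : orderOf s = 3)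
    (hts : t * s * t⁻¹ = s⁻¹) {z : G} (hz : z ∈ centerOf G Q) (hzt : t * z * t⁻¹ = z) :
    t * (s * z * s⁻¹) * t⁻¹ = z * (s * z * s⁻¹) := by
  rw [conj_conj_of_conj_eq_inv hts, hzt, hG.conj_inv_eq_mul_conj hs hz]

theorem exists_mul_conj_eq_of_mem_centerOf (hG : IsBiextraspecial G Q m) (hs : orderOf s = 3)
    (ht : orderOf t = 2) (hts : t * s * t⁻¹ = s⁻¹) {z : G} (hz : z ∈ centerOf G Q) :
    ∃ e₁ e₂ : G, e₁ ∈ centerOf G Q ∧ e₂ ∈ centerOf G Q ∧ t * e₁ * t⁻¹ = e₁ ∧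
      t * e₂ * t⁻¹ = e₂ ∧ z = e₁ * (s * e₂ * s⁻¹) := by
  have := hG.normal
  have hz' : t * z * t⁻¹ ∈ centerOf G Q := (centerOf.normal).conj_mem z hz t
  have hcomm := commute_of_mem_centerOf hz' (centerOf_le hz)
  obtain ⟨e₂, he₂⟩ : ∃ e₂, z * (t * z * t⁻¹) = e₂ := ⟨_, rfl⟩
  have he₂Z : e₂ ∈ centerOf G Q := he₂ ▸ mul_mem hz hz'
  have he₂' : s * e₂ * s⁻¹ ∈ centerOf G Q := (centerOf.normal).conj_mem e₂ he₂Z s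
  have he₂t : t * e₂ * t⁻¹ = e₂ := by
    calc t * e₂ * t⁻¹ = (t * z * t⁻¹) * (t * (t * z * t⁻¹) * t⁻¹) := by rw [← he₂]; group
      _ = e₂ := by rw [conj_conj_eq_self_of_orderOf_eq_two ht, hcomm.eq, he₂]
  have hze₂ : (t * z * t⁻¹) * e₂ = z := by
    rw [← he₂, ← mul_assoc, hcomm.eq, mul_assoc, hG.center_exponent _ hz', mul_one]
  refine ⟨z * (s * e₂ * s⁻¹), e₂, mul_mem hz he₂', he₂Z, ?_, he₂t, ?_⟩
  · calc t * (z * (s * e₂ * s⁻¹)) * t⁻¹ = (t * z * t⁻¹) * (t * (s * e₂ * s⁻¹) * t⁻¹) := by group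
      _ = z * (s * e₂ * s⁻¹) := by
        rw [hG.conj_conj_eq_mul_conj hs hts he₂Z he₂t, ← mul_assoc, hze₂]
  · rw [mul_assoc, hG.center_exponent _ he₂', mul_one]

theorem mul_conj_mem_centralizer (hG : IsBiextraspecial G Q m) (hs : orderOf s = 3)
    (ht : orderOf t = 2) (hts : t * s * t⁻¹ = s⁻¹) {u : G} (hu : u ∈ Q)
    (hut : u⁻¹ * (t * u * t⁻¹) ∈ centerOf G Q) :
    u * (s * (u⁻¹ * (t * u * t⁻¹)) * s⁻¹) ∈ Subgroup.centralizer {t} ⊓ Q := by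
  have := hG.normal
  obtain ⟨z, hz⟩ : ∃ z, u⁻¹ * (t * u * t⁻¹) = z := ⟨_, rfl⟩
  have htu : t * u * t⁻¹ = u * z := inv_mul_eq_iff_eq_mul.mp hz
  rw [hz] at hut ⊢
  have hzt : t * z * t⁻¹ = z := by
    calc t * z * t⁻¹ = (t * u * t⁻¹)⁻¹ * (t * (t * u * t⁻¹) * t⁻¹) := by rw [← hz]; group
      _ = z⁻¹ := by rw [conj_conj_eq_self_of_orderOf_eq_two ht, ← hz]; group
      _ = z := hG.inv_eq_of_mem_centerOf hut
  refine mem_centralizer_singleton_inf_iff.mpr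
    ⟨?_, mul_mem hu (this.conj_mem _ (centerOf_le hut) s)⟩
  calc t * (u * (s * z * s⁻¹)) * t⁻¹ = (t * u * t⁻¹) * (t * (s * z * s⁻¹) * t⁻¹) := by group
    _ = u * (z * z) * (s * z * s⁻¹) := by
      rw [hG.conj_conj_eq_mul_conj hs hts hut hzt, htu]; group
    _ = u * (s * z * s⁻¹) := by rw [hG.center_exponent _ hut, mul_one]

/-- In the elementary abelian group `Q/Z`, `q = (q^{s⁻¹} + (qᵗ)ˢ) + (q + qᵗ)ˢ`, and both summands
are fixed by `t`. -/
theorem exists_mul_conj_mem_centerOf (hG : IsBiextraspecial G Q m) (hs : orderOf s = 3)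
    (ht : orderOf t = 2) (hts : t * s * t⁻¹ = s⁻¹) {q : G} (hq : q ∈ Q) :
    ∃ r₁ ∈ Subgroup.centralizer {t} ⊓ Q, ∃ r₂ ∈ Subgroup.centralizer {t} ⊓ Q,
      (r₁ * (s * r₂ * s⁻¹))⁻¹ * q ∈ centerOf G Q := by
  have hQ := hG.normal
  set π := QuotientGroup.mk' (centerOf G Q)
  have hπ : ∀ x y : G, π x = π y ↔ x⁻¹ * y ∈ centerOf G Q := fun x y => QuotientGroup.eq
  have hc : ∀ x ∈ Q, ∀ y ∈ Q, π x * π y = π y * π x := fun x hx y hy => by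
    rw [← map_mul, ← map_mul, hπ]
    simpa [commutatorElement_def, mul_assoc] using
      hG.comm_mem_center _ (inv_mem hy) _ (inv_mem hx)
  have hsq : ∀ x ∈ Q, π x * π x = 1 := fun x hx => by
    rw [← map_mul, QuotientGroup.mk'_apply, QuotientGroup.eq_one_iff]
    exact hG.sq_mem_center x hx
  have lift : ∀ u ∈ Q, π (t * u * t⁻¹) = π u →
      ∃ r ∈ Subgroup.centralizer {t} ⊓ Q, π r = π u := by
    intro u hu h
    have hut := (hπ _ _).mp h.symm
    refine ⟨_, hG.mul_conj_mem_centralizer hs ht hts hu hut, ?_⟩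
    rw [eq_comm, hπ, inv_mul_cancel_left]
    exact (centerOf.normal).conj_mem _ hut s
  have hq₁ : s * q * s⁻¹ ∈ Q := hQ.conj_mem q hq s
  have hq₂ : s⁻¹ * q * s ∈ Q := by simpa using hQ.conj_mem q hq s⁻¹
  have hq₃ : t * q * t⁻¹ ∈ Q := hQ.conj_mem q hq t
  have hq₄ : s * (t * q * t⁻¹) * s⁻¹ ∈ Q := hQ.conj_mem _ hq₃ s
  obtain ⟨r₁, hr₁, e₁⟩ := lift _ (mul_mem hq₂ hq₄) (by
    rw [show t * ((s⁻¹ * q * s) * (s * (t * q * t⁻¹) * s⁻¹)) * t⁻¹ =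
        (t * (s⁻¹ * q * s) * t⁻¹) * (t * (s * (t * q * t⁻¹) * s⁻¹) * t⁻¹) by group,
      conj_inv_conj_of_conj_eq_inv hts, conj_conj_of_conj_eq_inv hts,
      conj_conj_eq_self_of_orderOf_eq_two ht, map_mul π (s * (t * q * t⁻¹) * s⁻¹),
      map_mul π (s⁻¹ * q * s), hc _ hq₄ _ hq₂])
  obtain ⟨r₂, hr₂, e₂⟩ := lift _ (mul_mem hq hq₃) (by
    rw [show t * (q * (t * q * t⁻¹)) * t⁻¹ = (t * q * t⁻¹) * (t * (t * q * t⁻¹) * t⁻¹) by group,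
      conj_conj_eq_self_of_orderOf_eq_two ht, map_mul π (t * q * t⁻¹), map_mul π q,
      hc _ hq₃ _ hq])
  refine ⟨r₁, hr₁, r₂, hr₂, (hπ _ _).mp ?_⟩
  have e₂' : π (s * r₂ * s⁻¹) = π (s * q * s⁻¹) * π (s * (t * q * t⁻¹) * s⁻¹) := by
    rw [map_mul, map_mul, e₂]
    simp only [← map_mul]
    congr 1
    group
  have hN := congrArg π (hG.mul_conj_mul_conj_inv_eq_one hs hq)
  rw [map_mul, map_mul, map_one, mul_assoc] at hN
  rw [map_mul π r₁, e₁, e₂', map_mul π (s⁻¹ * q * s)]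
  calc π (s⁻¹ * q * s) * π (s * (t * q * t⁻¹) * s⁻¹) *
        (π (s * q * s⁻¹) * π (s * (t * q * t⁻¹) * s⁻¹))
      = π (s⁻¹ * q * s) * (π (s * (t * q * t⁻¹) * s⁻¹) * π (s * (t * q * t⁻¹) * s⁻¹)) *
          π (s * q * s⁻¹) := by rw [hc _ hq₁ _ hq₄]; simp only [mul_assoc]
    _ = π (s * q * s⁻¹) * π (s⁻¹ * q * s) := by rw [hsq _ hq₄, mul_one, hc _ hq₁ _ hq₂]
    _ = π q := by rw [eq_inv_of_mul_eq_one_right hN, inv_eq_of_mul_eq_one_right (hsq q hq)]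

theorem exists_mul_conj_eq (hG : IsBiextraspecial G Q m) (hs : orderOf s = 3)
    (ht : orderOf t = 2) (hts : t * s * t⁻¹ = s⁻¹) {q : G} (hq : q ∈ Q) :
    ∃ r₁ ∈ Subgroup.centralizer {t} ⊓ Q, ∃ r₂ ∈ Subgroup.centralizer {t} ⊓ Q,
      r₁ * (s * r₂ * s⁻¹) = q := by
  obtain ⟨r₁, hr₁, r₂, hr₂, hz⟩ := hG.exists_mul_conj_mem_centerOf hs ht hts hq
  obtain ⟨e₁, e₂, he₁, he₂, he₁t, he₂t, he⟩ := hG.exists_mul_conj_eq_of_mem_centerOf hs ht hts hz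
  have hR : ∀ e ∈ centerOf G Q, t * e * t⁻¹ = e → e ∈ Subgroup.centralizer {t} ⊓ Q :=
    fun e he het => mem_centralizer_singleton_inf_iff.mpr ⟨het, centerOf_le he⟩
  refine ⟨r₁ * e₁, mul_mem hr₁ (hR _ he₁ he₁t), r₂ * e₂, mul_mem hr₂ (hR _ he₂ he₂t), ?_⟩
  have hcomm : Commute e₁ (s * r₂ * s⁻¹) :=
    commute_of_mem_centerOf he₁ (hG.normal.conj_mem _ (Subgroup.mem_inf.mp hr₂).2 s)
  calc r₁ * e₁ * (s * (r₂ * e₂) * s⁻¹) = r₁ * (e₁ * (s * r₂ * s⁻¹)) * (s * e₂ * s⁻¹) := by group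
    _ = r₁ * (s * r₂ * s⁻¹) * (e₁ * (s * e₂ * s⁻¹)) := by rw [hcomm.eq]; group
    _ = q := by rw [← he, mul_inv_cancel_left]

theorem map_mem (hG : IsBiextraspecial G Q m) (α : MulAut G) {q : G} (hq : q ∈ Q) : α q ∈ Q := by
  obtain ⟨e⟩ := hG.quot_iso
  have := hG.normal
  set F : G →* Equiv.Perm (Fin 3) := e.toMonoidHom.comp (QuotientGroup.mk' Q)
  have hF : ∀ g, F g = 1 → g ∈ Q := fun g hg => by simpa [F] using hg
  have hsq : ∀ p ∈ Q, F (α p) * F (α p) = 1 := by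
    intro p hp
    have h2 : orderOf (F (α p)) ∣ 2 ^ (2 + 2 * m) := (orderOf_map_dvd F _).trans <| by
      rw [MulEquiv.orderOf_eq, ← hG.card_Q]; exact Q.orderOf_dvd_natCard hp
    have h6 : orderOf (F (α p)) ∣ 2 * 3 := by
      rw [show 2 * 3 = 6 from rfl, ← Equiv.Perm.natCard_fin_three]
      exact orderOf_dvd_natCard _
    rw [← pow_two, ← orderOf_dvd_iff_pow_eq_one]
    exact (Nat.Coprime.coprime_dvd_left h2
      (Nat.Coprime.pow_left _ (by norm_num))).dvd_of_dvd_mul_right h6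
  refine hF _ (Equiv.Perm.eq_one_of_conj_mul_sq_eq_one_fin_three _ (hsq q hq) fun c => ?_)
  obtain ⟨g, rfl⟩ : ∃ g, F g = c := (e.surjective.comp (QuotientGroup.mk'_surjective Q)) c
  simpa [map_mul, map_inv] using hsq _ (mul_mem (this.conj_mem q hq (α.symm g)) hq)

theorem apply_commutatorElement (hG : IsBiextraspecial G Q m) (htQ : t ∉ Q)
    (β : MulAut (Subgroup.centralizer {t} ⊓ Q : Subgroup G))
    (x y : (Subgroup.centralizer {t} ⊓ Q : Subgroup G)) : β ⁅x, y⁆ = ⁅x, y⁆ := by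
  by_cases h : ⁅x, y⁆ = 1
  · rw [h, map_one]
  have hR : ∀ a b : (Subgroup.centralizer {t} ⊓ Q : Subgroup G),
      ((⁅a, b⁆ : (Subgroup.centralizer {t} ⊓ Q : Subgroup G)) : G) ∈ centerOf G Q := fun a b => by
    rw [← Subgroup.subtype_apply, map_commutatorElement]
    exact hG.comm_mem_center _ (Subgroup.mem_inf.mp a.2).2 _ (Subgroup.mem_inf.mp b.2).2
  have hfix : ∀ a : (Subgroup.centralizer {t} ⊓ Q : Subgroup G), t * a * t⁻¹ = a := fun a =>
    (mem_centralizer_singleton_inf_iff.mp a.2).1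
  have hβ : β ⁅x, y⁆ ≠ 1 := (map_ne_one_iff β β.injective).mpr h
  refine Subtype.ext (hG.eq_of_mem_centerOf_of_conj_eq htQ ?_ (hR x y) (hfix _) (hfix _)
    (fun h' => hβ (Subtype.ext h')) (fun h' => h (Subtype.ext h')))
  rw [map_commutatorElement]
  exact hR _ _

theorem apply_mem_centralizer_inf {L : Subgroup G} (hG : IsBiextraspecial G Q m) (htL : t ∈ L)
    {α : MulAut G} (hα : α ∈ autCentralizer G L) {x : G}
    (hx : x ∈ Subgroup.centralizer {t} ⊓ Q) : α x ∈ Subgroup.centralizer {t} ⊓ Q := by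
  obtain ⟨hxt, hxQ⟩ := mem_centralizer_singleton_inf_iff.mp hx
  refine mem_centralizer_singleton_inf_iff.mpr ⟨?_, hG.map_mem α hxQ⟩
  rw [← hα t htL, ← map_inv, ← map_mul, ← map_mul, hxt]

theorem eq_one_of_apply_eq_self {L : Subgroup G} (hG : IsBiextraspecial G Q m)
    (hL : Q.IsComplement' L) (hsL : s ∈ L) (hs : orderOf s = 3) (ht : orderOf t = 2)
    (hts : t * s * t⁻¹ = s⁻¹) {α : MulAut G} (hαL : ∀ l ∈ L, α l = l)
    (hαR : ∀ x ∈ Subgroup.centralizer {t} ⊓ Q, α x = x) : α = 1 := by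
  ext g
  obtain ⟨⟨q, l⟩, rfl, -⟩ := hL.existsUnique g
  obtain ⟨r₁, hr₁, r₂, hr₂, hq⟩ := hG.exists_mul_conj_eq hs ht hts q.2
  simp only [← hq, map_mul, map_inv, hαR _ hr₁, hαR _ hr₂, hαL _ hsL, hαL _ l.2, MulAut.one_apply]

end IsBiextraspecial

section Decomposition

variable {G : Type*} [Group G] {Q : Subgroup G} {m : ℕ} {s t : G}

def mulConj (Q : Subgroup G) [Q.Normal] (s t : G) :
    (Subgroup.centralizer {t} ⊓ Q : Subgroup G) × (Subgroup.centralizer {t} ⊓ Q : Subgroup G) →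
      Q :=
  fun p => ⟨p.1 * (s * p.2 * s⁻¹), mul_mem (Subgroup.mem_inf.mp p.1.2).2
    (Subgroup.Normal.conj_mem ‹_› _ (Subgroup.mem_inf.mp p.2.2).2 s)⟩

variable [Q.Normal]

@[simp]
theorem coe_mulConj (a b : (Subgroup.centralizer {t} ⊓ Q : Subgroup G)) :
    (mulConj Q s t (a, b) : G) = a * (s * b * s⁻¹) := rfl

theorem mulConj_eq_mul (a b : (Subgroup.centralizer {t} ⊓ Q : Subgroup G)) :
    mulConj Q s t (a, b) = mulConj Q s t (a, 1) * mulConj Q s t (1, b) :=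
  Subtype.ext (by simp)

theorem IsBiextraspecial.mulConj_bijective (hG : IsBiextraspecial G Q m) (hs : orderOf s = 3)
    (ht : orderOf t = 2) (hts : t * s * t⁻¹ = s⁻¹) : Function.Bijective (mulConj Q s t) := by
  refine ⟨fun a b hab => ?_, fun q => ?_⟩
  · obtain ⟨h₁, h₂⟩ :=
      hG.eq_and_eq_of_mul_conj_eq hs hts a.1.2 a.2.2 b.1.2 b.2.2 (congrArg Subtype.val hab)
    exact Prod.ext (Subtype.ext h₁) (Subtype.ext h₂)
  · obtain ⟨r₁, hr₁, r₂, hr₂, h⟩ := hG.exists_mul_conj_eq hs ht hts q.2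
    exact ⟨(⟨r₁, hr₁⟩, ⟨r₂, hr₂⟩), Subtype.ext h⟩

theorem IsBiextraspecial.mulConj_mul_mulConj (hG : IsBiextraspecial G Q m) (hs : orderOf s = 3)
    (a b : (Subgroup.centralizer {t} ⊓ Q : Subgroup G) ×
      (Subgroup.centralizer {t} ⊓ Q : Subgroup G)) :
    mulConj Q s t a * mulConj Q s t b =
      mulConj Q s t (⁅a.2, b.1⁆ * a.1 * b.1, ⁅a.2, b.1⁆ * a.2 * b.2) :=
  Subtype.ext <| hG.mul_conj_mul_mul_conj hs (Subgroup.mem_inf.mp a.1.2).2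
    (Subgroup.mem_inf.mp a.2.2).2 (Subgroup.mem_inf.mp b.1.2).2

noncomputable def IsBiextraspecial.extendAut (hG : IsBiextraspecial G Q m) (hs : orderOf s = 3)
    (ht : orderOf t = 2) (hts : t * s * t⁻¹ = s⁻¹) (htQ : t ∉ Q)
    (β : MulAut (Subgroup.centralizer {t} ⊓ Q : Subgroup G)) : MulAut Q :=
  let e := Equiv.ofBijective _ (hG.mulConj_bijective hs ht hts)
  MulEquiv.mk' (e.symm.trans ((β.toEquiv.prodCongr β.toEquiv).trans e)) fun x y => by
    obtain ⟨a, rfl⟩ := e.surjective x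
    obtain ⟨b, rfl⟩ := e.surjective y
    simp only [Equiv.trans_apply, Equiv.prodCongr_apply, Prod.map, e, Equiv.ofBijective_apply,
      hG.mulConj_mul_mulConj hs]
    rw [← Equiv.ofBijective_apply _ (hG.mulConj_bijective hs ht hts),
      Equiv.ofBijective_symm_apply_apply]
    -- `β` fixes the commutator `⁅a.2, b.1⁆` that twists the multiplication of pairs
    simp [← map_commutatorElement, hG.apply_commutatorElement htQ]

theorem IsBiextraspecial.extendAut_mulConj (hG : IsBiextraspecial G Q m) (hs : orderOf s = 3)
    (ht : orderOf t = 2) (hts : t * s * t⁻¹ = s⁻¹) (htQ : t ∉ Q)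
    (β : MulAut (Subgroup.centralizer {t} ⊓ Q : Subgroup G))
    (a b : (Subgroup.centralizer {t} ⊓ Q : Subgroup G)) :
    hG.extendAut hs ht hts htQ β (mulConj Q s t (a, b)) = mulConj Q s t (β a, β b) := by
  show mulConj Q s t (Prod.map β β
    ((Equiv.ofBijective _ (hG.mulConj_bijective hs ht hts)).symm (mulConj Q s t (a, b)))) = _
  rw [← Equiv.ofBijective_apply _ (hG.mulConj_bijective hs ht hts),
    Equiv.ofBijective_symm_apply_apply]
  rfl

theorem IsBiextraspecial.mulAut_ext (hG : IsBiextraspecial G Q m) (hs : orderOf s = 3)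
    (ht : orderOf t = 2) (hts : t * s * t⁻¹ = s⁻¹) {φ ψ : MulAut Q}
    (h₁ : ∀ r, φ (mulConj Q s t (r, 1)) = ψ (mulConj Q s t (r, 1)))
    (h₂ : ∀ r, φ (mulConj Q s t (1, r)) = ψ (mulConj Q s t (1, r))) : φ = ψ := by
  ext1 q
  obtain ⟨⟨a, b⟩, rfl⟩ := (hG.mulConj_bijective hs ht hts).2 q
  rw [mulConj_eq_mul, map_mul, map_mul, h₁, h₂]

theorem conjNormal_mulConj_left (r : (Subgroup.centralizer {t} ⊓ Q : Subgroup G)) :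
    MulAut.conjNormal s (mulConj Q s t (r, 1)) = mulConj Q s t (1, r) :=
  Subtype.ext (by simp)

theorem IsBiextraspecial.conjNormal_mulConj_right (hG : IsBiextraspecial G Q m)
    (hs : orderOf s = 3) (r : (Subgroup.centralizer {t} ⊓ Q : Subgroup G)) :
    MulAut.conjNormal s (mulConj Q s t (1, r)) =
      (mulConj Q s t (1, r))⁻¹ * (mulConj Q s t (r, 1))⁻¹ := by
  refine Subtype.ext ?_
  simp only [MulAut.conjNormal_apply, coe_mulConj, OneMemClass.coe_one, one_mul, mul_one,
    Subgroup.coe_mul, Subgroup.coe_inv, conj_conj_eq_conj_inv_of_orderOf_eq_three hs]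
  rw [← mul_inv_rev, eq_inv_of_mul_eq_one_right (hG.mul_conj_mul_conj_inv_eq_one hs
    (Subgroup.mem_inf.mp r.2).2)]
  group

theorem conjNormal_mulConj_left_eq_self (r : (Subgroup.centralizer {t} ⊓ Q : Subgroup G)) :
    MulAut.conjNormal t (mulConj Q s t (r, 1)) = mulConj Q s t (r, 1) :=
  Subtype.ext (by simpa using (mem_centralizer_singleton_inf_iff.mp r.2).1)

theorem conjNormal_mulConj_right_eq_conjNormal (hs : orderOf s = 3) (hts : t * s * t⁻¹ = s⁻¹)
    (r : (Subgroup.centralizer {t} ⊓ Q : Subgroup G)) :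
    MulAut.conjNormal t (mulConj Q s t (1, r)) = MulAut.conjNormal s (mulConj Q s t (1, r)) := by
  refine Subtype.ext ?_
  simp only [MulAut.conjNormal_apply, coe_mulConj, OneMemClass.coe_one, one_mul,
    conj_conj_eq_conj_inv_of_orderOf_eq_three hs, conj_conj_of_conj_eq_inv hts,
    (mem_centralizer_singleton_inf_iff.mp r.2).1]

theorem IsBiextraspecial.commute_conjNormal_extendAut_of_orderOf_eq_three
    (hG : IsBiextraspecial G Q m) (hs : orderOf s = 3) (ht : orderOf t = 2)
    (hts : t * s * t⁻¹ = s⁻¹) (htQ : t ∉ Q)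
    (β : MulAut (Subgroup.centralizer {t} ⊓ Q : Subgroup G)) :
    Commute (MulAut.conjNormal s) (hG.extendAut hs ht hts htQ β) := by
  refine hG.mulAut_ext hs ht hts (fun r => ?_) (fun r => ?_) <;> simp only [MulAut.mul_apply]
  · simp only [conjNormal_mulConj_left, hG.extendAut_mulConj, map_one]
  · simp only [hG.conjNormal_mulConj_right hs, map_mul, map_inv, hG.extendAut_mulConj, map_one]

theorem IsBiextraspecial.commute_conjNormal_extendAut_of_orderOf_eq_two
    (hG : IsBiextraspecial G Q m) (hs : orderOf s = 3) (ht : orderOf t = 2)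
    (hts : t * s * t⁻¹ = s⁻¹) (htQ : t ∉ Q)
    (β : MulAut (Subgroup.centralizer {t} ⊓ Q : Subgroup G)) :
    Commute (MulAut.conjNormal t) (hG.extendAut hs ht hts htQ β) := by
  refine hG.mulAut_ext hs ht hts (fun r => ?_) (fun r => ?_) <;> simp only [MulAut.mul_apply]
  · simp only [conjNormal_mulConj_left_eq_self, hG.extendAut_mulConj, map_one]
  · rw [conjNormal_mulConj_right_eq_conjNormal hs hts,
      ← MulAut.mul_apply (e₁ := hG.extendAut _ _ _ _ β),
      ← (hG.commute_conjNormal_extendAut_of_orderOf_eq_three hs ht hts htQ β).eq,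
      MulAut.mul_apply]
    simp only [hG.extendAut_mulConj, map_one, conjNormal_mulConj_right_eq_conjNormal hs hts]

theorem IsBiextraspecial.exists_mem_autCentralizer_apply_eq {L : Subgroup G}
    (hG : IsBiextraspecial G Q m) (hL : Q.IsComplement' L) (hL6 : Nat.card L = 6) (hsL : s ∈ L)
    (htL : t ∈ L) (hs : orderOf s = 3) (ht : orderOf t = 2) (hts : t * s * t⁻¹ = s⁻¹)
    (htQ : t ∉ Q) (β : MulAut (Subgroup.centralizer {t} ⊓ Q : Subgroup G)) :
    ∃ α ∈ autCentralizer G L, ∀ x : (Subgroup.centralizer {t} ⊓ Q : Subgroup G),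
      α x = β x := by
  set k := hG.extendAut hs ht hts htQ β
  have hLk : L ≤ (Subgroup.centralizer {k}).comap MulAut.conjNormal := by
    rw [← Subgroup.closure_pair_eq_of_natCard_eq_six hL6 hsL htL hs ht, Subgroup.closure_le]
    rintro x (rfl | rfl)
    exacts [Subgroup.mem_centralizer_singleton_iff.mpr
        (hG.commute_conjNormal_extendAut_of_orderOf_eq_three hs ht hts htQ β).eq,
      Subgroup.mem_centralizer_singleton_iff.mpr
        (hG.commute_conjNormal_extendAut_of_orderOf_eq_two hs ht hts htQ β).eq]
  obtain ⟨α, hαQ, hαL⟩ := hL.exists_mulAut_extend k fun l hl =>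
    Subgroup.mem_centralizer_singleton_iff.mp (hLk hl)
  refine ⟨α, hαL, fun x => ?_⟩
  rw [show (x : G) = mulConj Q s t (x, 1) by simp, hαQ, hG.extendAut_mulConj, map_one]
  simp

end Decomposition

/-- for a biextraspecial group `G = Q:L` of rank `m` and an
involution `t ∈ L`, restriction to the extraspecial subgroup `R = C_Q(t)` gives a
group isomorphism `C_{Aut(G)}(L) ≃ Aut(R)`. -/
theorem stmt18 (G : Type*) [Group G] (Q L : Subgroup G) (m : ℕ)
    (hG : IsBiextraspecial G Q m) (hL : Q.IsComplement' L)
    (t : G) (ht : t ∈ L) (hot : orderOf t = 2) :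
    ∃ f : autCentralizer G L →* MulAut (Subgroup.centralizer {t} ⊓ Q : Subgroup G),
      (∀ (α : autCentralizer G L)
          (x : (Subgroup.centralizer {t} ⊓ Q : Subgroup G)),
        ((f α) x : G) = (α : MulAut G) (x : G)) ∧
      Function.Bijective f := by
  have := hG.normal
  obtain ⟨e⟩ := hG.quot_iso
  have eL : L ≃* Equiv.Perm (Fin 3) := hL.symm.QuotientMulEquiv.symm.trans e
  obtain ⟨s, hsL, hs, hts⟩ := exists_orderOf_eq_three_conj_eq_inv eL ht hot
  have htQ : t ∉ Q := fun h => by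
    rw [Subgroup.mem_bot.mp (hL.disjoint.le_bot ⟨h, ht⟩), orderOf_one] at hot
    norm_num at hot
  refine ⟨MulAut.restrict _ _ fun α hα x hx => hG.apply_mem_centralizer_inf ht hα hx,
    fun _ _ => rfl, (injective_iff_map_eq_one _).mpr fun α hα => Subtype.ext ?_, fun β => ?_⟩
  · refine hG.eq_one_of_apply_eq_self hL hsL hs hot hts α.2 fun x hx => ?_
    exact congrArg Subtype.val (DFunLike.congr_fun hα ⟨x, hx⟩)
  · obtain ⟨α, hα, hαβ⟩ := hG.exists_mem_autCentralizer_apply_eq hL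
      (by rw [Nat.card_congr eL.toEquiv, Equiv.Perm.natCard_fin_three]) hsL ht hs hot hts htQ β
    exact ⟨⟨α, hα⟩, MulEquiv.ext fun x => Subtype.ext (hαβ x)⟩
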